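/- arXiv:2011.06270 — 3 statements merged into one kernel-verified Lean document; each statement's English description precedes it below -/
import Mathlib

section
/- Let μ be a positive Borel measure on ℝ such that ∫ exp(t·x^{2k}) dμ < ∞ for some k ∈ ℕ, k ≥ 1, and some constant t > 0. If ν is another such measure with ∫ x^{2kj} dμ = ∫ x^{2kj} dν for all j ∈ ℕ, then ∫ x² dμ = ∫ x² dν. -/
open MeasureTheory ProbabilityTheory Filter Topology

/-!
Push `μ` and `ν` forward along `x ↦ x ^ (2k)`. The images are finite measures on `[0, ∞)` whose
moment generating functions are finite near `0` and whose moments coincide. Their complex moment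
generating functions are therefore analytic on a vertical strip around the imaginary axis with the
same Taylor coefficients at `0`; by the identity theorem they agree on the imaginary axis, so the
two images have the same characteristic function and are equal. Finally `x ^ 2` is the function
`y ↦ y ^ (1/k)` of `y = x ^ (2k)`, so both second moments are the same integral against that image.
-/

theorem AnalyticAt.eventuallyEq_of_iteratedDeriv_eq {𝕜 : Type*} [NontriviallyNormedField 𝕜]
    [CompleteSpace 𝕜] [CharZero 𝕜] {f g : 𝕜 → 𝕜} {x : 𝕜} (hf : AnalyticAt 𝕜 f x)
    (hg : AnalyticAt 𝕜 g x) (h : ∀ n, iteratedDeriv n f x = iteratedDeriv n g x) :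
    f =ᶠ[𝓝 x] g := by
  have hfg := hf.hasFPowerSeriesAt.sub hg.hasFPowerSeriesAt
  simp only [h, sub_self] at hfg
  filter_upwards [hfg.eventually_eq_zero] with y hy
  exact sub_eq_zero.1 hy

namespace ProbabilityTheory

variable {Ω Ω' : Type*} {mΩ : MeasurableSpace Ω} {mΩ' : MeasurableSpace Ω'}
  {μ : Measure Ω} {μ' : Measure Ω'} {X : Ω → ℝ} {Y : Ω' → ℝ}

lemma iteratedDeriv_complexMGF_zero (h : 0 ∈ interior (integrableExpSet X μ)) (n : ℕ) :
    iteratedDeriv n (complexMGF X μ) 0 = moment X n μ := by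
  rw [iteratedDeriv_complexMGF (by simpa using h), moment, ← integral_complex_ofReal]
  simp

lemma isFiniteMeasure_of_zero_mem_integrableExpSet (h : 0 ∈ integrableExpSet X μ) :
    IsFiniteMeasure μ :=
  (integrable_const_iff_isFiniteMeasure one_ne_zero).1 (by simpa [integrableExpSet] using h)

lemma zero_mem_interior_integrableExpSet_of_nonneg {t : ℝ} (hXpos : 0 ≤ᵐ[μ] X) (ht : 0 < t)
    (h : Integrable (fun ω ↦ Real.exp (t * X ω)) μ) :
    0 ∈ interior (integrableExpSet X μ) := by
  have hXm : AEMeasurable X μ := Real.aemeasurable_of_aemeasurable_exp_mul ht.ne' h.1.aemeasurable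
  refine mem_interior_iff_mem_nhds.2 (mem_of_superset (Iio_mem_nhds ht) fun u hu ↦ ?_)
  refine h.mono (by fun_prop) ?_
  filter_upwards [hXpos] with ω hω
  simp only [Real.norm_eq_abs, Real.abs_exp, Real.exp_le_exp]
  exact mul_le_mul_of_nonneg_right hu.le hω

theorem map_eq_of_moment_eq (hX : 0 ∈ interior (integrableExpSet X μ))
    (hY : 0 ∈ interior (integrableExpSet Y μ')) (hmom : ∀ n, moment X n μ = moment Y n μ') :
    μ.map X = μ'.map Y := by
  have := isFiniteMeasure_of_zero_mem_integrableExpSet (interior_subset hX)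
  have := isFiniteMeasure_of_zero_mem_integrableExpSet (interior_subset hY)
  set S := {z : ℂ | z.re ∈ interior (integrableExpSet X μ) ∩ interior (integrableExpSet Y μ')}
  have hS : IsPreconnected S :=
    ((convex_integrableExpSet.interior.inter convex_integrableExpSet.interior).linear_preimage
      Complex.reLm).isPreconnected
  have h0 : (0 : ℂ) ∈ S := by simpa [S] using ⟨hX, hY⟩
  have hnear : complexMGF X μ =ᶠ[𝓝 0] complexMGF Y μ' :=
    (analyticAt_complexMGF (by simpa using hX)).eventuallyEq_of_iteratedDeriv_eq
      (analyticAt_complexMGF (by simpa using hY)) fun n ↦ by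
        rw [iteratedDeriv_complexMGF_zero hX, iteratedDeriv_complexMGF_zero hY, hmom]
  have hstrip : Set.EqOn (complexMGF X μ) (complexMGF Y μ') S :=
    (analyticOnNhd_complexMGF.mono fun z hz ↦ hz.1).eqOn_of_preconnected_of_eventuallyEq
      (analyticOnNhd_complexMGF.mono fun z hz ↦ hz.2) hS h0 hnear
  refine Measure.ext_of_charFun (funext fun t ↦ ?_)
  rw [← complexMGF_mul_I (aemeasurable_of_mem_interior_integrableExpSet hX),
    ← complexMGF_mul_I (aemeasurable_of_mem_interior_integrableExpSet hY)]
  exact hstrip (by simpa [S] using ⟨hX, hY⟩)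

end ProbabilityTheory

/-- If `μ` and `ν` are positive measures on `ℝ` with finite exponential moments
`∫ exp(t·x^(2k)) dμ < ∞` (for some `t > 0`), `k ≥ 1`, and all their moments of order `2kj`
agree, then their second moments agree. -/
theorem second_moment_determined_by_subsequence
    (μ ν : Measure ℝ) (k : ℕ) (hk : 1 ≤ k) (t s : ℝ) (ht : 0 < t) (hs : 0 < s)
    (hμ : Integrable (fun x : ℝ => Real.exp (t * x ^ (2 * k))) μ)
    (hν : Integrable (fun x : ℝ => Real.exp (s * x ^ (2 * k))) ν)
    (hmom : ∀ j : ℕ, ∫ x : ℝ, x ^ (2 * k * j) ∂μ = ∫ x : ℝ, x ^ (2 * k * j) ∂ν) :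
    ∫ x : ℝ, x ^ 2 ∂μ = ∫ x : ℝ, x ^ 2 ∂ν := by
  set φ : ℝ → ℝ := fun x ↦ x ^ (2 * k)
  have hφ (x : ℝ) : 0 ≤ φ x := (even_two_mul k).pow_nonneg x
  have hmap : μ.map φ = ν.map φ :=
    map_eq_of_moment_eq
      (zero_mem_interior_integrableExpSet_of_nonneg (ae_of_all _ hφ) ht hμ)
      (zero_mem_interior_integrableExpSet_of_nonneg (ae_of_all _ hφ) hs hν)
      fun j ↦ by simpa [moment, φ, ← pow_mul] using hmom j
  have hsq : ∀ x : ℝ, x ^ 2 = φ x ^ (k⁻¹ : ℝ) := fun x ↦ by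
    rw [show φ x = (x ^ 2) ^ k from pow_mul x 2 k,
      Real.pow_rpow_inv_natCast (sq_nonneg x) (by omega)]
  -- `integral_map` needs no integrability, so this also covers an infinite second moment.
  have hpush (ρ : Measure ℝ) : ∫ x, x ^ 2 ∂ρ = ∫ y, y ^ (k⁻¹ : ℝ) ∂(ρ.map φ) := by
    rw [integral_map (by fun_prop) (by fun_prop)]
    simp_rw [hsq]
  rw [hpush, hpush, hmap]
end

section
/- Let (b_n) be reals with b_n = 0 for n < 1, and define A_n = (q^{1-n-κ}/(1-q)) · b_n b_{n-1} (∑_{j=1}^{n+1} b_j − q² ∑_{j=1}^{n-3} b_j) and B_n = (q^{3-n-κ}/(1-q)) · b_n b_{n-1} b_{n-2} b_{n-3}. Then for all n ≥ 1, q·A_n·b_{n-2} + q·B_n = B_{n+1} + b_n·A_{n-1}. -/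
/-!
Write `S m = ∑_{j=1}^m b_j` and `t = q^(-n-κ)`. Since `b` vanishes below `1`, the recursion
`S (m + 1) = S m + b (m + 1)` holds for every integer `m`, so both sides of the identity are
polynomials in `t`, `q`, `b_{n-3}, …, b_{n+1}`, `S n` and `S (n - 4)`. The term `q² b_{n-3}` coming
from `S (n - 3)` in `q A_n b_{n-2}` is cancelled by `q B_n`, the term `b_{n+1}` coming from
`S (n + 1)` becomes `B_{n+1}`, and what remains is `b_n A_{n-1}`.
-/

open Finset

theorem sum_Icc_add_one_right_of_lt_eq_zero {M : Type*} [AddCommMonoid M] {f : ℤ → M} {a : ℤ}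
    (hf : ∀ n < a, f n = 0) (m : ℤ) :
    ∑ j ∈ Icc a (m + 1), f j = ∑ j ∈ Icc a m, f j + f (m + 1) := by
  rcases le_or_gt a (m + 1) with h | h
  · rw [← insert_Icc_right_eq_Icc_add_one h, sum_insert (by simp), add_comm]
  · rw [Icc_eq_empty (by omega), Icc_eq_empty (by omega), hf _ h, sum_empty, zero_add]

theorem l2_identity_general
    (q κ : ℝ) (hq0 : 0 < q)
    (b : ℤ → ℝ) (hb0 : ∀ n : ℤ, n < 1 → b n = 0)
    (A B : ℤ → ℝ)
    (hA : ∀ n : ℤ, A n = q ^ ((1 : ℝ) - n - κ) / (1 - q) * (b n * b (n - 1)) *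
      ((∑ j ∈ Finset.Icc (1 : ℤ) (n + 1), b j) - q ^ 2 * ∑ j ∈ Finset.Icc (1 : ℤ) (n - 3), b j))
    (hB : ∀ n : ℤ, B n = q ^ ((3 : ℝ) - n - κ) / (1 - q) *
      (b n * b (n - 1) * b (n - 2) * b (n - 3))) :
    ∀ n : ℤ, 1 ≤ n → q * A n * b (n - 2) + q * B n = B (n + 1) + b n * A (n - 1) := by
  intro n _
  set t := q ^ (-(n : ℝ) - κ)
  have hpow (k : ℕ) (x : ℝ) (hx : x = -(n : ℝ) - κ + k) : q ^ x = t * q ^ k := by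
    rw [hx, Real.rpow_add_natCast hq0.ne']
  have hS := sum_Icc_add_one_right_of_lt_eq_zero hb0
  have hAn : A n = q * t / (1 - q) * (b n * b (n - 1)) *
      ((∑ j ∈ Icc 1 n, b j) + b (n + 1) - q ^ 2 * ((∑ j ∈ Icc 1 (n - 4), b j) + b (n - 3))) := by
    rw [hA, hpow 1 _ (by push_cast; ring), hS n, show n - 3 = n - 4 + 1 by ring, hS (n - 4)]
    ring
  have hAn' : A (n - 1) = q ^ 2 * t / (1 - q) * (b (n - 1) * b (n - 2)) *
      ((∑ j ∈ Icc 1 n, b j) - q ^ 2 * ∑ j ∈ Icc 1 (n - 4), b j) := by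
    rw [hA, hpow 2 _ (by push_cast; ring)]
    ring_nf
  have hBn : B n = q ^ 3 * t / (1 - q) * (b n * b (n - 1) * b (n - 2) * b (n - 3)) := by
    rw [hB, hpow 3 _ (by push_cast; ring)]
    ring
  have hBn' : B (n + 1) = q ^ 2 * t / (1 - q) * (b (n + 1) * b n * b (n - 1) * b (n - 2)) := by
    rw [hB, hpow 2 _ (by push_cast; ring)]
    ring_nf
  rw [hAn, hAn', hBn, hBn']
  ring

/-- Identity (l2): with
`A_n = (q^(1-n-κ)/(1-q)) · b_n b_{n-1} (∑_{j=1}^{n+1} b_j − q² ∑_{j=1}^{n-3} b_j)` and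
`B_n = (q^(3-n-κ)/(1-q)) · b_n b_{n-1} b_{n-2} b_{n-3}`, one has
`q·A_n·b_{n-2} + q·B_n = B_{n+1} + b_n·A_{n-1}` for all `n ≥ 1`. -/
theorem l2_identity
    (q κ : ℝ) (hq0 : 0 < q) (hq1 : q < 1) (hκ : 0 ≤ κ)
    (b : ℤ → ℝ) (hb0 : ∀ n : ℤ, n < 1 → b n = 0)
    (A B : ℤ → ℝ)
    (hA : ∀ n : ℤ, A n = q ^ ((1 : ℝ) - n - κ) / (1 - q) * (b n * b (n - 1)) *
      ((∑ j ∈ Finset.Icc (1 : ℤ) (n + 1), b j) - q ^ 2 * ∑ j ∈ Finset.Icc (1 : ℤ) (n - 3), b j))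
    (hB : ∀ n : ℤ, B n = q ^ ((3 : ℝ) - n - κ) / (1 - q) *
      (b n * b (n - 1) * b (n - 2) * b (n - 3))) :
    ∀ n : ℤ, 1 ≤ n → q * A n * b (n - 2) + q * B n = B (n + 1) + b n * A (n - 1) :=
  l2_identity_general q κ hq0 b hb0 A B hA hB
end

section
/- Suppose (b_n)_{n≥1} satisfies the even/odd system of Lemma 3.1 (Equation (even-odd2)) and additionally the derived relation A_n = q^{n-2}(1+q)·∑_{j=1}^{n-1} b_j, where A_n = (q^{1-n-κ}/(1-q))·b_n b_{n-1}(∑_{j=1}^{n+1} b_j − q² ∑_{j=1}^{n-3} b_j). Then for odd n: (q^{-κ+2-n} − 1)·b_{n-1} + (q² − 1)·∑_{j=1}^{n-2} b_j + q^{-2n+5-κ}·b_n b_{n-1} b_{n-2} = 0. -/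
/-!
Write `S m = ∑_{j=1}^m b_j`. Since `b` vanishes below `1`, `S (m + 1) = S m + b (m + 1)` for every
integer `m`, so `b_n (S_{n+1} - q² S_{n-3})` is the left side of the odd equation at `n` plus
`q² b_n b_{n-2}`. Substituting the odd equation into `A_n = q^{n-2} (1 + q) S_{n-1}` and clearing
the powers of `q` leaves exactly the claimed relation.
-/

open Finset

theorem sum_Icc_one_eq_sum_add {M : Type*} [AddCommMonoid M] {f : ℤ → M}
    (hf : ∀ m < 1, f m = 0) {k m : ℤ} (hm : k + 1 = m) :
    ∑ j ∈ Icc 1 m, f j = ∑ j ∈ Icc 1 k, f j + f m := by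
  subst hm
  by_cases h : 1 ≤ k + 1
  · rw [← insert_Icc_right_eq_Icc_add_one h, sum_insert (by simp), add_comm]
  · rw [Icc_eq_empty (by omega), Icc_eq_empty (by omega), hf _ (by omega), add_zero]

/-- The relation at a single odd index `t`, with `b₀ b₁ b₂ b₃` standing for
`b_{t-2} b_{t-1} b_t b_{t+1}` and `s` for `∑_{j=1}^{t-2} b_j`. -/
theorem added_relation_of_odd_of_sumA {q κ t b₀ b₁ b₂ b₃ s : ℝ} (hq0 : 0 < q) (hq1 : q ≠ 1)
    (hodd : b₂ * (b₃ + b₂ + b₁ + (1 - q ^ 2) * s) = (q ^ (-κ) - q ^ t) * q ^ (κ + t - 1))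
    (hA : q ^ (1 - t - κ) / (1 - q) * (b₂ * b₁) * ((s + b₁ + b₂ + b₃) - q ^ 2 * (s - b₀))
      = q ^ (t - 2) * (1 + q) * (s + b₁)) :
    (q ^ (-κ + 2 - t) - 1) * b₁ + (q ^ 2 - 1) * s + q ^ (-2 * t + 5 - κ) * (b₂ * b₁ * b₀) = 0 := by
  have hq1' : 1 - q ≠ 0 := sub_ne_zero.mpr hq1.symm
  rw [show -2 * t + 5 - κ = 5 - t - t - κ by ring]
  simp only [Real.rpow_add hq0, Real.rpow_sub hq0, Real.rpow_neg hq0.le, Real.rpow_one,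
    Real.rpow_ofNat] at hodd hA ⊢
  field_simp at hodd hA ⊢
  linear_combination hA - q ^ 2 * b₁ * hodd

theorem added_relation_odd_general
    (q κ : ℝ) (hq0 : 0 < q) (hq1 : q < 1)
    (b : ℤ → ℝ) (hb0 : ∀ n : ℤ, n < 1 → b n = 0)
    (A : ℤ → ℝ)
    (hA : ∀ n : ℤ, A n = q ^ ((1 : ℝ) - n - κ) / (1 - q) * (b n * b (n - 1)) *
      ((∑ j ∈ Finset.Icc (1 : ℤ) (n + 1), b j) - q ^ 2 * ∑ j ∈ Finset.Icc (1 : ℤ) (n - 3), b j))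
    (hodd : ∀ n : ℤ, 1 ≤ n → Odd n →
      b n * (b (n + 1) + b n + b (n - 1) + (1 - q ^ 2) * ∑ j ∈ Finset.Icc (1 : ℤ) (n - 2), b j)
        = (q ^ (-κ) - q ^ (n : ℝ)) * q ^ (κ + n - 1))
    (hAsum : ∀ n : ℤ, 1 ≤ n →
      A n = q ^ ((n : ℝ) - 2) * (1 + q) * ∑ j ∈ Finset.Icc (1 : ℤ) (n - 1), b j) :
    ∀ n : ℤ, 1 ≤ n → Odd n →
      (q ^ (-κ + 2 - (n : ℝ)) - 1) * b (n - 1)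
        + (q ^ 2 - 1) * (∑ j ∈ Finset.Icc (1 : ℤ) (n - 2), b j)
        + q ^ ((-2 : ℝ) * n + 5 - κ) * (b n * b (n - 1) * b (n - 2)) = 0 := by
  intro n hn hn_odd
  have hS_succ : ∑ j ∈ Icc 1 (n + 1), b j
      = ∑ j ∈ Icc 1 (n - 2), b j + b (n - 1) + b n + b (n + 1) := by
    rw [sum_Icc_one_eq_sum_add hb0 (k := n) rfl, sum_Icc_one_eq_sum_add hb0 (k := n - 1) (by ring),
      sum_Icc_one_eq_sum_add hb0 (k := n - 2) (by ring)]
  have hS_pred : ∑ j ∈ Icc 1 (n - 1), b j = ∑ j ∈ Icc 1 (n - 2), b j + b (n - 1) :=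
    sum_Icc_one_eq_sum_add hb0 (by ring)
  have hS_pred3 : ∑ j ∈ Icc 1 (n - 3), b j = ∑ j ∈ Icc 1 (n - 2), b j - b (n - 2) :=
    eq_sub_of_add_eq (sum_Icc_one_eq_sum_add hb0 (by ring)).symm
  have hAn := (hA n).symm.trans (hAsum n hn)
  rw [hS_succ, hS_pred, hS_pred3] at hAn
  exact added_relation_of_odd_of_sumA hq0 hq1.ne (hodd n hn hn_odd) hAn

/-- From the system (even-odd2) and the derived relation
`A_n = q^(n-2)(1+q)·∑_{j=1}^{n-1} b_j`, one obtains, for odd `n`,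
`(q^(−κ+2−n) − 1)·b_{n-1} + (q² − 1)·∑_{j=1}^{n-2} b_j + q^(−2n+5−κ)·b_n b_{n-1} b_{n-2} = 0`. -/
theorem added_relation_odd
    (q κ : ℝ) (hq0 : 0 < q) (hq1 : q < 1) (hκ : 0 ≤ κ)
    (b : ℤ → ℝ) (hb0 : ∀ n : ℤ, n < 1 → b n = 0)
    (A : ℤ → ℝ)
    (hA : ∀ n : ℤ, A n = q ^ ((1 : ℝ) - n - κ) / (1 - q) * (b n * b (n - 1)) *
      ((∑ j ∈ Finset.Icc (1 : ℤ) (n + 1), b j) - q ^ 2 * ∑ j ∈ Finset.Icc (1 : ℤ) (n - 3), b j))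
    (heven : ∀ n : ℤ, 1 ≤ n → Even n →
      b n * (b (n + 1) + b n + b (n - 1) + (1 - q ^ 2) * ∑ j ∈ Finset.Icc (1 : ℤ) (n - 2), b j)
        = (1 - q ^ (n : ℝ)) * q ^ (κ + n - 1))
    (hodd : ∀ n : ℤ, 1 ≤ n → Odd n →
      b n * (b (n + 1) + b n + b (n - 1) + (1 - q ^ 2) * ∑ j ∈ Finset.Icc (1 : ℤ) (n - 2), b j)
        = (q ^ (-κ) - q ^ (n : ℝ)) * q ^ (κ + n - 1))
    (hAsum : ∀ n : ℤ, 1 ≤ n →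
      A n = q ^ ((n : ℝ) - 2) * (1 + q) * ∑ j ∈ Finset.Icc (1 : ℤ) (n - 1), b j) :
    ∀ n : ℤ, 1 ≤ n → Odd n →
      (q ^ (-κ + 2 - (n : ℝ)) - 1) * b (n - 1)
        + (q ^ 2 - 1) * (∑ j ∈ Finset.Icc (1 : ℤ) (n - 2), b j)
        + q ^ ((-2 : ℝ) * n + 5 - κ) * (b n * b (n - 1) * b (n - 2)) = 0 :=
  added_relation_odd_general q κ hq0 hq1 b hb0 A hA hodd hAsum
end
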